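/- arXiv:1603.08504 — 3 statements merged into one kernel-verified Lean document; each statement's English description precedes it below -/
import Mathlib

section
/- Let α > 0, β > 0 be real numbers and n ∈ ℕ. Then the Turán type inequality [Γ(β+(n+2)α)]² / (Γ(β+(n+1)α) · Γ(β+(n+3)α)) · [E^{n+1}_{α,β}(z)]² ≤ E^n_{α,β}(z) · E^{n+2}_{α,β}(z) holds for all z > 0. -/
/-!
By Cauchy–Schwarz, `c (∑ tₖ)² ≤ (∑ uₖ)(∑ vₖ)` as soon as `c tₖ² ≤ uₖ vₖ` termwise. For the
three remainders the termwise inequality says that `Γ(x + h)² / (Γ(x) Γ(x + 2h))`, with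
`x = β + m α`, `h = α`, `m > n`, is at least its value at `m = n + 1`. This ratio is
nondecreasing along `x ↦ x + h` because `Γ(x + h)³ Γ(x + 3h) ≤ Γ(x) Γ(x + 2h)³`, which
holds factor by factor in Euler's product for `Γ`.
-/

/-- The Mittag-Leffler function `E_{α,β}(z) = ∑_{n=0}^∞ z^n / Γ(α n + β)`. -/
noncomputable def mittagLeffler (α β z : ℝ) : ℝ :=
  ∑' n : ℕ, z ^ n / Real.Gamma (α * n + β)

/-- The `n`-th remainder of the Mittag-Leffler series:
`E^n_{α,β}(z) = ∑_{k=n+1}^∞ z^k / Γ(α k + β)`. -/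
noncomputable def mittagLefflerRem (α β : ℝ) (n : ℕ) (z : ℝ) : ℝ :=
  ∑' k : ℕ, z ^ (n + 1 + k) / Real.Gamma (α * (n + 1 + k) + β)

open Real Filter Topology Finset

namespace Real

lemma mul_add_two_mul_pow_three_le_add_pow_three_mul {y h : ℝ} (hy : 0 ≤ y) (hh : 0 ≤ h) :
    y * (y + 2 * h) ^ 3 ≤ (y + h) ^ 3 * (y + 3 * h) := by
  nlinarith [mul_nonneg hy (pow_nonneg hh 3), pow_nonneg hh 4]

lemma GammaSeq_pow_three_mul_le {x h : ℝ} (hx : 0 < x) (hh : 0 ≤ h) (n : ℕ) :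
    GammaSeq (x + h) n ^ 3 * GammaSeq (x + 3 * h) n ≤
      GammaSeq x n * GammaSeq (x + 2 * h) n ^ 3 := by
  have hprod : (∏ j ∈ range (n + 1), (x + j)) * (∏ j ∈ range (n + 1), (x + 2 * h + j)) ^ 3 ≤
      (∏ j ∈ range (n + 1), (x + h + j)) ^ 3 * ∏ j ∈ range (n + 1), (x + 3 * h + j) := by
    simp only [← prod_pow, ← prod_mul_distrib]
    refine prod_le_prod (fun j _ => by positivity) fun j _ => ?_
    linear_combination
      mul_add_two_mul_pow_three_le_add_pow_three_mul (y := x + j) (by positivity) hh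
  have hN : (0 : ℝ) ≤ n := n.cast_nonneg
  have hpow : ∀ k : ℕ, (n : ℝ) ^ (x + k * h) = (n : ℝ) ^ x * ((n : ℝ) ^ h) ^ k := fun k => by
    rw [rpow_add_of_nonneg hN hx.le (by positivity), mul_comm (k : ℝ), rpow_mul_natCast hN]
  have hnum : ((n : ℝ) ^ (x + h) * n.factorial) ^ 3 * ((n : ℝ) ^ (x + 3 * h) * n.factorial) =
      (n : ℝ) ^ x * n.factorial * ((n : ℝ) ^ (x + 2 * h) * n.factorial) ^ 3 := by
    have h1 := hpow 1; have h2 := hpow 2; have h3 := hpow 3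
    push_cast at h1 h2 h3
    rw [one_mul] at h1
    rw [h1, h2, h3]; ring
  simp only [GammaSeq]
  rw [div_pow, div_pow, div_mul_div_comm, div_mul_div_comm, hnum]
  exact div_le_div_of_nonneg_left (by positivity) (by positivity) hprod

lemma Gamma_pow_three_mul_le {x h : ℝ} (hx : 0 < x) (hh : 0 ≤ h) :
    Gamma (x + h) ^ 3 * Gamma (x + 3 * h) ≤ Gamma x * Gamma (x + 2 * h) ^ 3 :=
  le_of_tendsto_of_tendsto'
    (((GammaSeq_tendsto_Gamma _).pow 3).mul (GammaSeq_tendsto_Gamma _))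
    ((GammaSeq_tendsto_Gamma _).mul ((GammaSeq_tendsto_Gamma _).pow 3))
    (GammaSeq_pow_three_mul_le hx hh)

lemma rpow_le_Gamma_add_div_Gamma {s a : ℝ} (hs : 0 < s) (ha : 0 < a) :
    s ^ a ≤ Gamma (s + 1 + a) / Gamma (s + 1) := by
  have hslope := convexOn_log_Gamma.slope_mono_adjacent (x := s) (y := s + 1) (z := s + 1 + a)
    hs (by positivity : 0 < s + 1 + a) (by linarith) (by linarith)
  have hstep : log (Gamma (s + 1)) - log (Gamma s) = log s := by
    rw [Gamma_add_one hs.ne', log_mul hs.ne' (by positivity)]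
    ring
  simp only [Function.comp_apply, add_sub_cancel_left, div_one, hstep] at hslope
  rw [← log_le_log_iff (by positivity) (by positivity), log_rpow hs,
    log_div (by positivity) (by positivity)]
  rwa [le_div_iff₀ ha, mul_comm] at hslope

lemma tendsto_Gamma_add_div_Gamma_atTop {a : ℝ} (ha : 0 < a) :
    Tendsto (fun t => Gamma (t + a) / Gamma t) atTop atTop := by
  have hlow : Tendsto (fun t : ℝ => (t - 1) ^ a) atTop atTop :=
    (tendsto_rpow_atTop ha).comp (tendsto_atTop_add_const_right _ (-1) tendsto_id)
  refine tendsto_atTop_mono' _ ?_ hlow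
  filter_upwards [eventually_gt_atTop 1] with t ht
  have := rpow_le_Gamma_add_div_Gamma (sub_pos.2 ht) ha
  rwa [sub_add_cancel] at this

end Real

lemma tsum_sq_le_tsum_mul_tsum_of_sq_le_mul {ι : Type*} {r f g : ι → ℝ} (hr : Summable r)
    (hf : Summable f) (hg : Summable g) (hf0 : ∀ i, 0 ≤ f i) (hg0 : ∀ i, 0 ≤ g i)
    (h : ∀ i, r i ^ 2 ≤ f i * g i) : (∑' i, r i) ^ 2 ≤ (∑' i, f i) * ∑' i, g i :=
  le_of_tendsto_of_tendsto' (Tendsto.pow hr.hasSum 2) (Tendsto.mul hf.hasSum hg.hasSum)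
    fun s => sum_sq_le_sum_mul_sum_of_sq_le_mul s (fun i _ => hf0 i) (fun i _ => hg0 i)
      fun i _ => h i

-- The indices are those of `mittagLefflerRem_eq_tsum` at `n`, `n + 1` and `n + 2`.
lemma turan_tsum_tail {f : ℕ → ℝ} (hf : Summable f) (hf0 : ∀ m, 0 ≤ f m) {c : ℝ} (hc : 0 ≤ c)
    {n : ℕ} (h : ∀ m, n < m → c * f (m + 1) ^ 2 ≤ f m * f (m + 2)) :
    c * (∑' k, f (n + 1 + 1 + k)) ^ 2 ≤ (∑' k, f (n + 1 + k)) * ∑' k, f (n + 2 + 1 + k) := by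
  have htail : ∀ j, Summable fun k => f (j + k) := fun j =>
    hf.comp_injective (add_right_injective j)
  have hsq : (∑' k, √c * f (n + 1 + 1 + k)) ^ 2 = c * (∑' k, f (n + 1 + 1 + k)) ^ 2 := by
    rw [tsum_mul_left, mul_pow, sq_sqrt hc]
  rw [← hsq]
  refine tsum_sq_le_tsum_mul_tsum_of_sq_le_mul ((htail _).mul_left _) (htail _) (htail _)
    (fun k => hf0 _) (fun k => hf0 _) fun k => ?_
  rw [mul_pow, sq_sqrt hc]
  have := h (n + 1 + k) (by omega)
  rwa [show n + 1 + k + 1 = n + 1 + 1 + k by omega, show n + 1 + k + 2 = n + 2 + 1 + k by omega]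
    at this

noncomputable def gammaTuranRatio (h x : ℝ) : ℝ :=
  Gamma (x + h) ^ 2 / (Gamma x * Gamma (x + 2 * h))

lemma gammaTuranRatio_le_add_self {h x : ℝ} (hx : 0 < x) (hh : 0 ≤ h) :
    gammaTuranRatio h x ≤ gammaTuranRatio h (x + h) := by
  unfold gammaTuranRatio
  rw [show x + h + h = x + 2 * h by ring, show x + h + 2 * h = x + 3 * h by ring,
    div_le_div_iff₀ (by positivity) (by positivity)]
  linear_combination Gamma_pow_three_mul_le hx hh

lemma monotone_gammaTuranRatio {h x : ℝ} (hx : 0 < x) (hh : 0 ≤ h) :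
    Monotone fun m : ℕ => gammaTuranRatio h (h * m + x) := by
  refine monotone_nat_of_le_succ fun m => ?_
  rw [show h * ((m + 1 : ℕ) : ℝ) + x = h * m + x + h by push_cast; ring]
  exact gammaTuranRatio_le_add_self (by positivity) hh

noncomputable def mittagLefflerTerm (α β z : ℝ) (m : ℕ) : ℝ :=
  z ^ m / Gamma (α * m + β)

lemma summable_mittagLefflerTerm {α : ℝ} (hα : 0 < α) (β z : ℝ) :
    Summable (mittagLefflerTerm α β z) := by
  have harg : Tendsto (fun m : ℕ => α * m + β) atTop atTop :=
    tendsto_atTop_add_const_right _ β (tendsto_natCast_atTop_atTop.const_mul_atTop hα)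
  refine summable_of_ratio_norm_eventually_le (r := 1 / 2) (by norm_num) ?_
  filter_upwards [harg.eventually_gt_atTop 0,
    ((tendsto_Gamma_add_div_Gamma_atTop hα).comp harg).eventually_ge_atTop (2 * |z|)]
    with m hpos hratio
  have hΓ := Gamma_pos_of_pos hpos
  have hΓ' := Gamma_pos_of_pos (add_pos hpos hα)
  simp only [Function.comp_apply, le_div_iff₀ hΓ] at hratio
  simp only [mittagLefflerTerm, norm_div, norm_pow, norm_eq_abs, abs_of_pos hΓ]
  push_cast
  rw [show α * (m + 1) + β = α * m + β + α by ring, abs_of_pos hΓ', div_le_iff₀ hΓ', pow_succ]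
  calc |z| ^ m * |z| = 1 / 2 * (|z| ^ m / Gamma (α * m + β)) * (2 * |z| * Gamma (α * m + β)) := by
        field_simp
    _ ≤ _ := by gcongr

lemma mittagLefflerTerm_mul_mittagLefflerTerm_add_two {α β : ℝ} (hα : 0 ≤ α) (hβ : 0 < β)
    (z : ℝ) (m : ℕ) :
    mittagLefflerTerm α β z m * mittagLefflerTerm α β z (m + 2) =
      gammaTuranRatio α (α * m + β) * mittagLefflerTerm α β z (m + 1) ^ 2 := by
  have h0 : Gamma (α * m + β) ≠ 0 := by positivity
  have h2 : Gamma (α * (m + 2) + β) ≠ 0 := by positivity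
  unfold mittagLefflerTerm gammaTuranRatio
  push_cast
  field_simp
  ring_nf

lemma mittagLefflerRem_eq_tsum (α β : ℝ) (n : ℕ) (z : ℝ) :
    mittagLefflerRem α β n z = ∑' k, mittagLefflerTerm α β z (n + 1 + k) := by
  simp only [mittagLefflerRem, mittagLefflerTerm]
  push_cast
  rfl

/-- Sharp Turán type inequality for remainders of the Mittag-Leffler series. -/
theorem mittagLefflerRem_turan_sharp (α β : ℝ) (hα : 0 < α) (hβ : 0 < β) (n : ℕ) :
    ∀ z : ℝ, 0 < z →
      (Real.Gamma (β + (n + 2) * α)) ^ 2 /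
          (Real.Gamma (β + (n + 1) * α) * Real.Gamma (β + (n + 3) * α)) *
          (mittagLefflerRem α β (n + 1) z) ^ 2 ≤
        mittagLefflerRem α β n z * mittagLefflerRem α β (n + 2) z := by
  intro z hz
  have hc : Gamma (β + (n + 2) * α) ^ 2 / (Gamma (β + (n + 1) * α) * Gamma (β + (n + 3) * α)) =
      gammaTuranRatio α (α * (n + 1 : ℕ) + β) := by
    unfold gammaTuranRatio
    push_cast
    ring_nf
  simp only [mittagLefflerRem_eq_tsum, hc]
  refine turan_tsum_tail (summable_mittagLefflerTerm hα β z)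
    (fun m => by unfold mittagLefflerTerm; positivity) ?_ fun m hm => ?_
  · unfold gammaTuranRatio
    positivity
  · rw [mittagLefflerTerm_mul_mittagLefflerTerm_add_two hα.le hβ]
    gcongr
    exact monotone_gammaTuranRatio hβ hα.le hm
end

section
/- Let α > 0, β > 0 be real numbers. Then the Turán type inequality E_{α,β}(z)·E_{α,β+2}(z) − [E_{α,β+1}(z)]² + (β+1)·E_{α,β+1}(z)·E_{α,β+2}(z) ≥ 0 holds for all z > 0. -/
open Real Filter Set

theorem Real.rpow_mul_Gamma_le_Gamma_add {x a : ℝ} (hx : 1 < x) (ha : 0 < a) :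
    (x - 1) ^ a * Gamma x ≤ Gamma (x + a) := by
  have hslope := convexOn_log_Gamma.slope_mono_adjacent (x := x - 1) (y := x) (z := x + a)
    (mem_Ioi.2 (by linarith)) (mem_Ioi.2 (by linarith)) (by linarith) (by linarith)
  have hrec : Gamma x = (x - 1) * Gamma (x - 1) := by
    simpa using Gamma_add_one (sub_ne_zero.2 hx.ne')
  have hΓ : 0 < Gamma (x - 1) := Gamma_pos_of_pos (by linarith)
  simp only [Function.comp_apply, sub_sub_cancel, div_one, add_sub_cancel_left, hrec,
    log_mul (sub_ne_zero.2 hx.ne') hΓ.ne'] at hslope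
  rw [← log_le_log_iff (by positivity) (Gamma_pos_of_pos (by linarith)), hrec,
    log_mul (by positivity) (by positivity), log_rpow (by linarith),
    log_mul (sub_ne_zero.2 hx.ne') hΓ.ne']
  rw [le_div_iff₀ ha] at hslope
  linarith

theorem Real.div_Gamma_eq_mul_div_Gamma_add_one {s : ℝ} (hs : s ≠ 0) (a : ℝ) :
    a / Gamma s = s * (a / Gamma (s + 1)) := by
  rw [Gamma_add_one hs, mul_div_assoc', mul_div_mul_left _ _ hs]

theorem summable_pow_div_Gamma_mul_add {α : ℝ} (hα : 0 < α) (β z : ℝ) :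
    Summable fun n : ℕ => z ^ n / Gamma (α * n + β) := by
  refine summable_of_ratio_norm_eventually_le (r := 1 / 2) (by norm_num) ?_
  have hlin : Tendsto (fun n : ℕ => α * n + β - 1) atTop atTop := by
    simpa only [add_sub_assoc] using
      tendsto_atTop_add_const_right _ (β - 1) (tendsto_natCast_atTop_atTop.const_mul_atTop hα)
  filter_upwards [hlin.eventually_gt_atTop 0,
    ((tendsto_rpow_atTop hα).comp hlin).eventually_ge_atTop (2 * |z|)] with n hx hbig
  set x := α * n + β
  have hΓ : 0 < Gamma x := Gamma_pos_of_pos (by linarith)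
  have hΓα : 0 < Gamma (x + α) := Gamma_pos_of_pos (by linarith)
  have hratio : 2 * |z| * Gamma x ≤ Gamma (x + α) :=
    (mul_le_mul_of_nonneg_right hbig hΓ.le).trans (rpow_mul_Gamma_le_Gamma_add (by linarith) hα)
  have hshift : α * ↑(n + 1) + β = x + α := by push_cast; ring
  rw [hshift, norm_div, norm_div, norm_pow, norm_pow, norm_of_nonneg hΓ.le,
    norm_of_nonneg hΓα.le, Real.norm_eq_abs, div_le_iff₀ hΓα]
  calc |z| ^ (n + 1) = 1 / 2 * (|z| ^ n / Gamma x) * (2 * |z| * Gamma x) := by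
        field_simp; ring
    _ ≤ 1 / 2 * (|z| ^ n / Gamma x) * Gamma (x + α) := by gcongr

theorem sq_tsum_mul_le_tsum_mul_tsum_sq_mul {ι : Type*} {c v : ι → ℝ} (hc : ∀ i, 0 ≤ c i)
    (h0 : Summable c) (h1 : Summable fun i => v i * c i) (h2 : Summable fun i => v i ^ 2 * c i) :
    (∑' i, v i * c i) ^ 2 ≤ (∑' i, c i) * ∑' i, v i ^ 2 * c i := by
  -- `∑ c (t + v)² ≥ 0` for every `t`, so this quadratic in `t` has nonpositive discriminant.
  have hquad (t : ℝ) :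
      0 ≤ (∑' i, c i) * (t * t) + 2 * (∑' i, v i * c i) * t + ∑' i, v i ^ 2 * c i := by
    have hsum := ((h0.hasSum.mul_left (t * t)).add (h1.hasSum.mul_left (2 * t))).add h2.hasSum
    have hnonneg := hsum.nonneg fun i => by linarith [mul_nonneg (sq_nonneg (t + v i)) (hc i)]
    linarith
  have hdiscrim := discrim_le_zero hquad
  rw [discrim] at hdiscrim
  linarith

/-- Turán type inequality for the Mittag-Leffler function. -/
theorem mittagLeffler_turan (α β : ℝ) (hα : 0 < α) (hβ : 0 < β) :
    ∀ z : ℝ, 0 < z →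
      mittagLeffler α β z * mittagLeffler α (β + 2) z -
          (mittagLeffler α (β + 1) z) ^ 2 +
          (β + 1) * mittagLeffler α (β + 1) z * mittagLeffler α (β + 2) z ≥ 0 := by
  intro z hz
  set c : ℕ → ℝ := fun n => z ^ n / Gamma (α * n + (β + 2))
  set v : ℕ → ℝ := fun n => α * n + (β + 1)
  have hc (n : ℕ) : 0 ≤ c n := by positivity
  have h1 (n : ℕ) : z ^ n / Gamma (α * n + (β + 1)) = v n * c n := by
    rw [div_Gamma_eq_mul_div_Gamma_add_one (by positivity)]
    simp only [v, c]; ring_nf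
  have h0 (n : ℕ) : z ^ n / Gamma (α * n + β) = v n ^ 2 * c n - v n * c n := by
    rw [div_Gamma_eq_mul_div_Gamma_add_one (by positivity), add_assoc, h1]
    simp only [v]; ring
  have hsum1 := (summable_pow_div_Gamma_mul_add hα (β + 1) z).congr h1
  have hsum2 : Summable fun n => v n ^ 2 * c n :=
    ((summable_pow_div_Gamma_mul_add hα β z).add hsum1).congr fun n => by rw [h0]; ring
  have hE2 : mittagLeffler α (β + 2) z = ∑' n, c n := rfl
  have hE1 : mittagLeffler α (β + 1) z = ∑' n, v n * c n := tsum_congr h1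
  have hE0 : mittagLeffler α β z = ∑' n, v n ^ 2 * c n - ∑' n, v n * c n :=
    (tsum_congr h0).trans (hsum2.tsum_sub hsum1)
  have hcs := sq_tsum_mul_le_tsum_mul_tsum_sq_mul hc (summable_pow_div_Gamma_mul_add hα _ z)
    hsum1 hsum2
  have hT0 : 0 ≤ ∑' n, c n := tsum_nonneg hc
  have hT1 : 0 ≤ ∑' n, v n * c n := tsum_nonneg fun n => mul_nonneg (by positivity) (hc n)
  rw [hE0, hE1, hE2]
  linarith [mul_nonneg (mul_nonneg hβ.le hT1) hT0]
end

section
/- Let α > 0 and β₁, β₂ be real numbers with β₁ ≥ β₂ > 1. Then the Wilker-type inequality [𝔼_{α,β₂}(z)]^{(β₁−β₂)/(β₂−1)} + 𝔼_{α,β₂}(z)/𝔼_{α,β₁}(z) ≥ 2 holds for all real z ≥ 0, where the power is a real power of the positive number 𝔼_{α,β₂}(z). -/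
/-- The normalized Mittag-Leffler function `𝔼_{α,β}(z) = Γ(β) E_{α,β}(z)`. -/
noncomputable def mittagLefflerNorm (α β z : ℝ) : ℝ :=
  Real.Gamma β * mittagLeffler α β z

open Set Filter

section ConvexIncrements

variable {𝕜 : Type*} [Field 𝕜] [LinearOrder 𝕜] [IsStrictOrderedRing 𝕜] {s : Set 𝕜} {f : 𝕜 → 𝕜}

theorem ConvexOn.map_add_sub_map_le {x y t : 𝕜} (hf : ConvexOn 𝕜 s f) (hx : x ∈ s)
    (hyt : y + t ∈ s) (hxy : x ≤ y) (ht : 0 ≤ t) :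
    f (x + t) - f x ≤ f (y + t) - f y := by
  rcases ht.eq_or_lt with rfl | ht
  · simp
  rcases hxy.eq_or_lt with rfl | hxy
  · rfl
  have hy : y ∈ s := hf.1.ordConnected.out hx hyt ⟨hxy.le, by linarith⟩
  have hxt : x + t ∈ s := hf.1.ordConnected.out hx hyt ⟨by linarith, by linarith⟩
  have hslope : slope f x (x + t) ≤ slope f y (y + t) :=
    calc slope f x (x + t)
        ≤ slope f x (y + t) :=
          hf.slope_mono hx ⟨hxt, by simp [ht.ne']⟩ ⟨hyt, by simp; linarith⟩ (by linarith)
      _ = slope f (y + t) x := slope_comm _ _ _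
      _ ≤ slope f (y + t) y :=
          hf.slope_mono hyt ⟨hx, by simp; linarith⟩ ⟨hy, by simp [ht.ne']⟩ hxy.le
      _ = slope f y (y + t) := slope_comm _ _ _
  simp only [slope_def_field, add_sub_cancel_left] at hslope
  exact (div_le_div_iff_of_pos_right ht).mp hslope

end ConvexIncrements

namespace Real

theorem Gamma_mul_rpow_le_Gamma_add {x t : ℝ} (hx : 1 < x) (ht : 0 ≤ t) :
    Gamma x * (x - 1) ^ t ≤ Gamma (x + t) := by
  rcases ht.eq_or_lt with rfl | ht
  · simp
  have hx₁ : 0 < x - 1 := by linarith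
  have hslope := convexOn_log_Gamma.slope_mono_adjacent (x := x - 1) (y := x) (z := x + t)
    hx₁ (by simp only [mem_Ioi]; linarith) (by linarith) (by linarith)
  have hrec : Gamma x = (x - 1) * Gamma (x - 1) := by
    simpa using Gamma_add_one hx₁.ne'
  have hΓ₁ := Gamma_pos_of_pos hx₁
  -- the secant slope of `log ∘ Gamma` on `[x - 1, x]` is `log (x - 1)`
  simp only [Function.comp, sub_sub_cancel, add_sub_cancel_left, div_one, hrec,
    log_mul hx₁.ne' hΓ₁.ne', add_sub_cancel_right, le_div_iff₀ ht] at hslope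
  rw [← log_le_log_iff (by positivity) (Gamma_pos_of_pos (by linarith)),
    log_mul (by positivity) (by positivity), log_rpow hx₁, hrec, log_mul hx₁.ne' hΓ₁.ne']
  linarith

theorem Gamma_mul_Gamma_add_le {x y t : ℝ} (hx : 0 < x) (hxy : x ≤ y) (ht : 0 ≤ t) :
    Gamma y * Gamma (x + t) ≤ Gamma x * Gamma (y + t) := by
  have hlog := convexOn_log_Gamma.map_add_sub_map_le (x := x) (y := y) (t := t)
    hx (by simp only [mem_Ioi]; linarith) hxy ht
  simp only [Function.comp] at hlog
  have hΓx := Gamma_pos_of_pos hx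
  have hΓy := Gamma_pos_of_pos (hx.trans_le hxy)
  have hΓxt := Gamma_pos_of_pos (show 0 < x + t by linarith)
  have hΓyt := Gamma_pos_of_pos (show 0 < y + t by linarith)
  rw [← log_le_log_iff (by positivity) (by positivity), log_mul hΓy.ne' hΓxt.ne',
    log_mul hΓx.ne' hΓyt.ne']
  linarith

end Real

open Real

theorem summable_mittagLeffler_series {α : ℝ} (hα : 0 < α) (β z : ℝ) :
    Summable fun n : ℕ ↦ z ^ n / Gamma (α * n + β) := by
  refine summable_of_ratio_norm_eventually_le (r := 1 / 2) (by norm_num) ?_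
  have hlin : Tendsto (fun n : ℕ ↦ α * n + (β - 1)) atTop atTop :=
    tendsto_atTop_add_const_right _ _ (tendsto_natCast_atTop_atTop.const_mul_atTop hα)
  have hpow : Tendsto (fun n : ℕ ↦ (α * n + (β - 1)) ^ α) atTop atTop :=
    (tendsto_rpow_atTop hα).comp hlin
  filter_upwards [hpow.eventually_ge_atTop (2 * |z| + 1), hlin.eventually_gt_atTop 0]
    with n hgrowth hpos
  set x := α * n + β
  have hΓ := Gamma_pos_of_pos (show 0 < x by linarith)
  have hratio : Gamma x * (2 * |z| + 1) ≤ Gamma (x + α) :=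
    calc Gamma x * (2 * |z| + 1)
        ≤ Gamma x * (x - 1) ^ α := by
          gcongr; convert hgrowth using 2; ring
      _ ≤ Gamma (x + α) := Gamma_mul_rpow_le_Gamma_add (by linarith) hα.le
  have hsucc : α * ((n + 1 : ℕ) : ℝ) + β = x + α := by push_cast; ring
  have hΓα := Gamma_pos_of_pos (show 0 < x + α by linarith)
  simp only [hsucc, norm_div, norm_pow, Real.norm_eq_abs, abs_of_pos hΓ, abs_of_pos hΓα]
  rw [pow_succ]
  calc |z| ^ n * |z| / Gamma (x + α)
      ≤ |z| ^ n * |z| / (Gamma x * (2 * |z| + 1)) := by gcongr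
    _ = |z| ^ n / Gamma x * (|z| / (2 * |z| + 1)) := by field_simp
    _ ≤ |z| ^ n / Gamma x * (1 / 2) := by
        refine mul_le_mul_of_nonneg_left ?_ (by positivity)
        rw [div_le_iff₀ (by positivity)]
        linarith [abs_nonneg z]
    _ = 1 / 2 * (|z| ^ n / Gamma x) := mul_comm _ _

theorem mittagLefflerNorm_eq_tsum (α β z : ℝ) :
    mittagLefflerNorm α β z = ∑' n : ℕ, Gamma β * (z ^ n / Gamma (α * n + β)) :=
  tsum_mul_left.symm

theorem one_le_mittagLefflerNorm {α β z : ℝ} (hα : 0 < α) (hβ : 0 < β) (hz : 0 ≤ z) :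
    1 ≤ mittagLefflerNorm α β z := by
  have hsum := (summable_mittagLeffler_series hα β z).mul_left (Gamma β)
  rw [mittagLefflerNorm_eq_tsum]
  calc 1 = Gamma β * (z ^ 0 / Gamma (α * (0 : ℕ) + β)) := by simp [(Gamma_pos_of_pos hβ).ne']
    _ ≤ _ := hsum.le_tsum 0 fun n _ ↦ by positivity

theorem mittagLefflerNorm_antitoneOn {α z : ℝ} (hα : 0 < α) (hz : 0 ≤ z) :
    AntitoneOn (fun β ↦ mittagLefflerNorm α β z) (Ioi 0) := by
  intro β₂ hβ₂ β₁ hβ₁ hβ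
  simp only [mittagLefflerNorm_eq_tsum]
  have hsum (β : ℝ) := (summable_mittagLeffler_series hα β z).mul_left (Gamma β)
  refine (hsum β₁).tsum_le_tsum (fun n ↦ ?_) (hsum β₂)
  have hcross := Gamma_mul_Gamma_add_le hβ₂ hβ (show 0 ≤ α * n by positivity)
  rw [add_comm β₂, add_comm β₁] at hcross
  rw [mul_div_left_comm, mul_div_left_comm (Gamma β₂)]
  refine mul_le_mul_of_nonneg_left ?_ (pow_nonneg hz n)
  rw [div_le_div_iff₀ (Gamma_pos_of_pos (by simp only [mem_Ioi] at hβ₁; positivity))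
    (Gamma_pos_of_pos (by simp only [mem_Ioi] at hβ₂; positivity))]
  linarith

/-- Wilker-type inequality for normalized Mittag-Leffler functions. -/
theorem mittagLefflerNorm_wilker (α β₁ β₂ : ℝ) (hα : 0 < α)
    (hβ₂ : 1 < β₂) (hβ : β₂ ≤ β₁) :
    ∀ z : ℝ, 0 ≤ z →
      (mittagLefflerNorm α β₂ z) ^ ((β₁ - β₂) / (β₂ - 1)) +
          mittagLefflerNorm α β₂ z / mittagLefflerNorm α β₁ z ≥ 2 := by
  intro z hz
  have hβ₂₀ : 0 < β₂ := by linarith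
  have hone₂ := one_le_mittagLefflerNorm hα hβ₂₀ hz
  have hone₁ := one_le_mittagLefflerNorm hα (hβ₂₀.trans_le hβ) hz
  have hanti := mittagLefflerNorm_antitoneOn hα hz hβ₂₀ (hβ₂₀.trans_le hβ) hβ
  have hpow : 1 ≤ mittagLefflerNorm α β₂ z ^ ((β₁ - β₂) / (β₂ - 1)) :=
    one_le_rpow hone₂ (div_nonneg (by linarith) (by linarith))
  have hquot : 1 ≤ mittagLefflerNorm α β₂ z / mittagLefflerNorm α β₁ z :=
    (one_le_div (by linarith)).mpr hanti
  linarith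
end
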